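/- arXiv:1712.01801 — 6 statements merged into one kernel-verified Lean document; each statement's English description precedes it below -/
import Mathlib

section
/- Let f : [t0,∞) → ℝ be differentiable and satisfy f'(t) ≥ (3/t)(1 - e^{f(t)/2}) for all t ≥ t0 > 0. Then for every ε > 0 there exists T ≥ t0 such that f(t) ≥ -ε for all t ≥ T. -/
/-!
Fix `ε > 0` and put `δ = 3 (1 - e^{-ε/2}) > 0`. Wherever `f t ≤ -ε` the inequality gives
`f' t ≥ δ / t`. So `f` cannot stay below `-ε` for ever: it would grow at least like `δ log t`.
And once `f T ≥ -ε`, the level `-ε` is a barrier: `f` can only cross it upwards.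
-/

open Real Set

theorem le_image_of_deriv_pos_of_eq {f : ℝ → ℝ} {a b c : ℝ}
    (hf : ∀ x ∈ Icc a b, DifferentiableAt ℝ f x) (ha : c ≤ f a)
    (hc : ∀ x ∈ Ico a b, f x = c → 0 < deriv f x) : ∀ ⦃x⦄, x ∈ Icc a b → c ≤ f x := by
  intro x hx
  have hneg : -f x ≤ -c :=
    image_le_of_deriv_right_lt_deriv_boundary (f := fun x => -f x) (f' := fun x => -deriv f x)
      (B := fun _ => -c) (B' := fun _ => 0)
      (fun y hy => (hf y hy).continuousAt.neg.continuousWithinAt)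
      (fun y hy => (hf y (Ico_subset_Icc_self hy)).hasDerivAt.neg.hasDerivWithinAt)
      (neg_le_neg ha) (fun _ => hasDerivAt_const _ _)
      (fun y hy hyc => neg_neg_of_pos (hc y hy (neg_inj.1 hyc))) hx
  linarith

theorem add_mul_log_sub_log_le_of_div_le_deriv {f : ℝ → ℝ} {a δ : ℝ} (ha : 0 < a)
    (hf : ∀ x ≥ a, DifferentiableAt ℝ f x) (hf' : ∀ x ≥ a, δ / x ≤ deriv f x)
    {x : ℝ} (hx : a ≤ x) : f a + δ * (log x - log a) ≤ f x := by
  have hlog : ∀ y ∈ Icc a x, HasDerivAt (fun y => f a + δ * (log y - log a)) (δ / y) y := by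
    intro y hy
    have := ((hasDerivAt_log (ha.trans_le hy.1).ne').sub_const (log a)).const_mul δ |>.const_add (f a)
    simpa [div_eq_mul_inv] using this
  refine image_le_of_deriv_right_le_deriv_boundary (B := f)
    (fun y hy => (hlog y hy).continuousAt.continuousWithinAt)
    (fun y hy => (hlog y (Ico_subset_Icc_self hy)).hasDerivWithinAt) (by simp)
    (fun y hy => (hf y hy.1).continuousAt.continuousWithinAt)
    (fun y hy => (hf y hy.1).hasDerivAt.hasDerivWithinAt) (fun y hy => hf' y hy.1)
    (right_mem_Icc.2 hx)

theorem exists_le_of_div_le_deriv_of_lt {f : ℝ → ℝ} {a δ c : ℝ} (ha : 0 < a) (hδ : 0 < δ)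
    (hf : ∀ x ≥ a, DifferentiableAt ℝ f x) (hf' : ∀ x ≥ a, f x < c → δ / x ≤ deriv f x) :
    ∃ T ≥ a, c ≤ f T := by
  by_contra! hlt
  have hstep : 0 ≤ (c - f a) / δ := div_nonneg (by linarith [hlt a le_rfl]) hδ.le
  set x := a * exp ((c - f a) / δ)
  have hax : a ≤ x := le_mul_of_one_le_right ha.le (one_le_exp hstep)
  have hlog : log x - log a = (c - f a) / δ := by
    rw [log_mul ha.ne' (exp_ne_zero _), log_exp]; ring
  have hgrowth := add_mul_log_sub_log_le_of_div_le_deriv ha hf (fun y hy => hf' y hy (hlt y hy)) hax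
  rw [hlog, mul_div_cancel₀ _ hδ.ne'] at hgrowth
  linarith [hlt x hax]

theorem stmt0 (f : ℝ → ℝ) (t0 : ℝ) (ht0 : 0 < t0)
    (hdiff : ∀ t ≥ t0, DifferentiableAt ℝ f t)
    (hineq : ∀ t ≥ t0, deriv f t ≥ (3 / t) * (1 - Real.exp (f t / 2))) :
    ∀ ε > 0, ∃ T ≥ t0, ∀ t ≥ T, f t ≥ -ε := by
  intro ε hε
  set δ := 3 * (1 - exp (-ε / 2))
  have hδ : 0 < δ := by
    have : exp (-ε / 2) < 1 := exp_lt_one_iff.2 (by linarith)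
    simp only [δ]; linarith
  have hgrowth : ∀ t ≥ t0, f t ≤ -ε → δ / t ≤ deriv f t := by
    intro t ht hft
    have hexp : exp (f t / 2) ≤ exp (-ε / 2) := exp_le_exp.2 (by linarith)
    have htpos : 0 < t := ht0.trans_le ht
    calc δ / t = 3 / t * (1 - exp (-ε / 2)) := by ring
      _ ≤ 3 / t * (1 - exp (f t / 2)) := by gcongr
      _ ≤ deriv f t := hineq t ht
  obtain ⟨T, hT, hfT⟩ :=
    exists_le_of_div_le_deriv_of_lt ht0 hδ hdiff fun t ht hft => hgrowth t ht hft.le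
  refine ⟨T, hT, fun t ht => ?_⟩
  refine le_image_of_deriv_pos_of_eq (fun x hx => hdiff x (hT.trans hx.1)) hfT ?_ (right_mem_Icc.2 ht)
  intro x hx hfx
  have hxt0 : t0 ≤ x := hT.trans hx.1
  exact (div_pos hδ (ht0.trans_le hxt0)).trans_le (hgrowth x hxt0 hfx.le)
end

section
/- Let u : [t1,∞) → ℝ be differentiable with u(t)² ≤ K t^{-1} for all t ≥ t1 > 0 and some K > 0, and suppose ∂_t(u²)(t) ≤ -(3/t) u(t)² + C t^{-2} |u(t)| for all t ≥ t1. Then there exists C' > 0 such that |u(t)| ≤ C' t^{-1} for all t ≥ t1. -/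
/-!
For `v = t³ u²` the differential inequality becomes `v' ≤ C t |u| = C √(v / t)`, so `√v` grows at
most like `C √t`. Precisely, for `c > |C|` the barrier `B = (A + c √t)²` satisfies `B' = c √(B / t)`,
so `v` can never cross it from below; with `A = √(v t₁)` this gives `t³ u² ≤ (A + c √t)² ≲ t`,
that is `t |u| = O(1)`.
-/

open Real Set

theorem hasDerivAt_sq_add_mul_sqrt (A c : ℝ) {x : ℝ} (hx : 0 < x) :
    HasDerivAt (fun y => (A + c * √y) ^ 2) ((A + c * √x) * (c / √x)) x := by
  have hsqrt := ((hasDerivAt_sqrt hx.ne').const_mul c).const_add A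
  refine (hsqrt.pow 2).congr_deriv ?_
  push_cast
  field_simp

theorem le_sq_add_mul_sqrt_of_deriv_lt {f f' : ℝ → ℝ} {a A c : ℝ} (ha : 0 < a) (hA : 0 ≤ A)
    (hc : 0 < c) (hf : ∀ x ≥ a, HasDerivAt f (f' x) x) (hfa : f a ≤ A ^ 2)
    (hf' : ∀ x ≥ a, 0 < f x → f' x < c * √(f x / x)) {x : ℝ} (hx : a ≤ x) :
    f x ≤ (A + c * √x) ^ 2 := by
  have hpos : ∀ y ∈ Icc a x, 0 < y := fun y hy => ha.trans_le hy.1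
  refine image_le_of_deriv_right_lt_deriv_boundary' (f' := f')
    (B' := fun y => (A + c * √y) * (c / √y))
    (fun y hy => (hf y hy.1).continuousAt.continuousWithinAt)
    (fun y hy => (hf y hy.1).hasDerivWithinAt) ?_
    (fun y hy => (hasDerivAt_sq_add_mul_sqrt A c (hpos y hy)).continuousAt.continuousWithinAt)
    (fun y hy => (hasDerivAt_sq_add_mul_sqrt A c (hpos y (Ico_subset_Icc_self hy))).hasDerivWithinAt)
    ?_ ⟨hx, le_rfl⟩
  · nlinarith [sqrt_nonneg a, mul_nonneg hc.le (sqrt_nonneg a)]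
  · intro y hy hcross
    have hy0 := hpos y (Ico_subset_Icc_self hy)
    have hbarrier : 0 < A + c * √y := by positivity
    calc f' y < c * √(f y / y) := hf' y hy.1 (hcross ▸ by positivity)
      _ = (A + c * √y) * (c / √y) := by
        rw [hcross, sqrt_div' _ hy0.le, sqrt_sq hbarrier.le]
        ring

theorem add_mul_sqrt_le_mul_sqrt {a A c x : ℝ} (ha : 0 < a) (hA : 0 ≤ A) (hx : a ≤ x) :
    A + c * √x ≤ (A / √a + c) * √x := by
  have hsa : 0 < √a := sqrt_pos.2 ha
  have : A ≤ A / √a * √x := by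
    rw [div_mul_eq_mul_div, le_div_iff₀ hsa]
    exact mul_le_mul_of_nonneg_left (sqrt_le_sqrt hx) hA
  linarith

theorem three_mul_sq_mul_sq_add_cube_mul_lt_mul_sqrt {t y d C c : ℝ} (ht : 0 < t) (hy : y ≠ 0)
    (hc : |C| < c) (hd : d ≤ -(3 / t) * y ^ 2 + C / t ^ 2 * |y|) :
    3 * t ^ 2 * y ^ 2 + t ^ 3 * d < c * √(t ^ 3 * y ^ 2 / t) := by
  have hy' : 0 < t * |y| := mul_pos ht (abs_pos.2 hy)
  have hsqrt : √(t ^ 3 * y ^ 2 / t) = t * |y| := by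
    rw [← sqrt_sq hy'.le]; congr 1; field_simp; rw [sq_abs]
  have hd' := mul_le_mul_of_nonneg_left hd (pow_nonneg ht.le 3)
  rw [hsqrt]
  calc 3 * t ^ 2 * y ^ 2 + t ^ 3 * d
      ≤ C * (t * |y|) := by field_simp at hd' ⊢; linarith
    _ < c * (t * |y|) := mul_lt_mul_of_pos_right ((le_abs_self C).trans_lt hc) hy'

theorem abs_le_mul_inv_of_cube_mul_sq_le {t y M : ℝ} (ht : 0 < t) (hM : 0 ≤ M)
    (h : t ^ 3 * y ^ 2 ≤ M ^ 2 * t) : |y| ≤ M * t⁻¹ := by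
  have hsq : (t * |y|) ^ 2 ≤ M ^ 2 := by
    have hty : (t * |y|) ^ 2 * t = t ^ 3 * y ^ 2 := by rw [mul_pow, sq_abs]; ring
    exact le_of_mul_le_mul_right (by linarith) ht
  rw [← div_eq_mul_inv, le_div_iff₀ ht, mul_comm]
  exact (pow_le_pow_iff_left₀ (by positivity) hM two_ne_zero).1 hsq

theorem stmt5_general (u : ℝ → ℝ) (t1 C : ℝ) (ht1 : 0 < t1)
    (hdiff : ∀ t ≥ t1, DifferentiableAt ℝ u t)
    (hineq : ∀ t ≥ t1, deriv (fun s => (u s) ^ 2) t ≤ -(3 / t) * (u t) ^ 2 + C / t ^ 2 * |u t|) :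
    ∃ C' > 0, ∀ t ≥ t1, |u t| ≤ C' * t⁻¹ := by
  set c := |C| + 1
  set A := √(t1 ^ 3 * u t1 ^ 2)
  have hv_deriv : ∀ t ≥ t1, HasDerivAt (fun s => s ^ 3 * u s ^ 2)
      (3 * t ^ 2 * u t ^ 2 + t ^ 3 * deriv (fun s => u s ^ 2) t) t := fun t ht => by
    have hcube : HasDerivAt (fun s : ℝ => s ^ 3) (3 * t ^ 2) t := by
      simpa using hasDerivAt_pow 3 t
    exact hcube.mul ((hdiff t ht).pow 2).hasDerivAt
  have hv_deriv_lt : ∀ t ≥ t1, 0 < t ^ 3 * u t ^ 2 →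
      3 * t ^ 2 * u t ^ 2 + t ^ 3 * deriv (fun s => u s ^ 2) t < c * √(t ^ 3 * u t ^ 2 / t) :=
    fun t ht hv => three_mul_sq_mul_sq_add_cube_mul_lt_mul_sqrt (ht1.trans_le ht)
      (fun h => by simp [h] at hv) (lt_add_one _) (hineq t ht)
  refine ⟨A / √t1 + c, by positivity, fun t ht => ?_⟩
  have ht0 : 0 < t := ht1.trans_le ht
  have hv := le_sq_add_mul_sqrt_of_deriv_lt (A := A) ht1 (sqrt_nonneg _) (by positivity) hv_deriv
    (sq_sqrt (by positivity)).ge hv_deriv_lt ht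
  have hbarrier := pow_le_pow_left₀ (by positivity)
    (add_mul_sqrt_le_mul_sqrt (A := A) (c := c) ht1 (sqrt_nonneg _) ht) 2
  rw [mul_pow, sq_sqrt ht0.le] at hbarrier
  exact abs_le_mul_inv_of_cube_mul_sq_le ht0 (by positivity) (hv.trans hbarrier)

theorem stmt5 (u : ℝ → ℝ) (t1 K C : ℝ) (ht1 : 0 < t1) (hK : 0 < K) (hC : 0 < C)
    (hdiff : ∀ t ≥ t1, DifferentiableAt ℝ u t)
    (hbound : ∀ t ≥ t1, (u t) ^ 2 ≤ K * t⁻¹)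
    (hineq : ∀ t ≥ t1, deriv (fun s => (u s) ^ 2) t ≤ -(3 / t) * (u t) ^ 2 + C / t ^ 2 * |u t|) :
    ∃ C' > 0, ∀ t ≥ t1, |u t| ≤ C' * t⁻¹ :=
  stmt5_general u t1 C ht1 hdiff hineq
end

section
/- Let c⁰ : [s1, s_max) → ℝ be C² with c⁰ > 0, (c⁰)' > 0, and (c⁰)'' (s) ≤ C (c⁰(s))^{-3/2} ((c⁰)'(s))² for all s ∈ [s1, s_max), where C > 0 and c⁰(s1) ≥ 1. Then (c⁰)' is bounded on [s1, s_max) and c⁰(s) - c⁰(s1) ≤ C' |s - s1| for a constant C' depending only on C, c⁰(s1), (c⁰)'(s1). -/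
/-!
Along a solution of `c'' ≤ C c^{-3/2} (c')²` with `c, c' > 0` we have
`(log c')' ≤ C c^{-3/2} c' = (-2 C c^{-1/2})'`, so `log c' + 2 C c^{-1/2}` is nonincreasing.
Hence `log c'(s) ≤ log c'(s₁) + 2 C c(s₁)^{-1/2}`, which bounds `c'`; the linear bound on `c`
follows by the mean value theorem.
-/

open Real Set

lemma Convex.antitoneOn_of_hasDerivAt_nonpos {D : Set ℝ} (hD : Convex ℝ D) {f f' : ℝ → ℝ}
    (hf : ∀ x ∈ D, HasDerivAt f (f' x) x) (hf' : ∀ x ∈ D, f' x ≤ 0) : AntitoneOn f D :=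
  antitoneOn_of_hasDerivWithinAt_nonpos hD (fun x hx ↦ (hf x hx).continuousAt.continuousWithinAt)
    (fun x hx ↦ (hf x (interior_subset hx)).hasDerivWithinAt) fun x hx ↦ hf' x (interior_subset hx)

noncomputable def lyapunov (C : ℝ) (c : ℝ → ℝ) (t : ℝ) : ℝ :=
  log (deriv c t) + 2 * C * c t ^ (-1 / 2 : ℝ)

lemma hasDerivAt_lyapunov {c : ℝ → ℝ} {s : ℝ} (C : ℝ) (hc : 0 < c s) (hc' : 0 < deriv c s)
    (hdc : DifferentiableAt ℝ c s) (hdc' : DifferentiableAt ℝ (deriv c) s) :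
    HasDerivAt (lyapunov C c)
      (deriv (deriv c) s / deriv c s - C * c s ^ (-3 / 2 : ℝ) * deriv c s) s := by
  have hlog := hdc'.hasDerivAt.log hc'.ne'
  have hrpow := hdc.hasDerivAt.rpow_const (p := -1 / 2) (Or.inl hc.ne')
  rw [show (-1 / 2 : ℝ) - 1 = -3 / 2 by norm_num] at hrpow
  exact (hlog.add (hrpow.const_mul (2 * C))).congr_deriv (by ring)

lemma lyapunov_antitoneOn {c : ℝ → ℝ} {C : ℝ} {D : Set ℝ} (hD : Convex ℝ D)
    (hc : ∀ s ∈ D, 0 < c s) (hc' : ∀ s ∈ D, 0 < deriv c s)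
    (hdc : ∀ s ∈ D, DifferentiableAt ℝ c s) (hdc' : ∀ s ∈ D, DifferentiableAt ℝ (deriv c) s)
    (hineq : ∀ s ∈ D, deriv (deriv c) s ≤ C * c s ^ (-3 / 2 : ℝ) * deriv c s ^ 2) :
    AntitoneOn (lyapunov C c) D := by
  refine hD.antitoneOn_of_hasDerivAt_nonpos
    (fun s hs ↦ hasDerivAt_lyapunov C (hc s hs) (hc' s hs) (hdc s hs) (hdc' s hs)) fun s hs ↦ ?_
  rw [sub_nonpos, div_le_iff₀ (hc' s hs)]
  linear_combination hineq s hs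

lemma deriv_le_of_lyapunov_le {c : ℝ → ℝ} {C s₁ s : ℝ} (hC : 0 ≤ C) (hc : 0 ≤ c s)
    (hc'₁ : 0 < deriv c s₁) (hc' : 0 < deriv c s) (hle : lyapunov C c s ≤ lyapunov C c s₁) :
    deriv c s ≤ deriv c s₁ * exp (2 * C * c s₁ ^ (-1 / 2 : ℝ)) := by
  have hrpow : 0 ≤ 2 * C * c s ^ (-1 / 2 : ℝ) := by positivity
  have hlog : log (deriv c s) ≤ log (deriv c s₁) + 2 * C * c s₁ ^ (-1 / 2 : ℝ) := by
    unfold lyapunov at hle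
    linarith
  calc deriv c s = exp (log (deriv c s)) := (exp_log hc').symm
    _ ≤ exp (log (deriv c s₁) + 2 * C * c s₁ ^ (-1 / 2 : ℝ)) := exp_le_exp.mpr hlog
    _ = deriv c s₁ * exp (2 * C * c s₁ ^ (-1 / 2 : ℝ)) := by rw [exp_add, exp_log hc'₁]

theorem stmt13_general (c : ℝ → ℝ) (s1 smax C : ℝ) (hs : s1 < smax) (hC : 0 < C)
    (hpos : ∀ s ∈ Set.Ico s1 smax, 0 < c s)
    (hdiff : ∀ s ∈ Set.Ico s1 smax, DifferentiableAt ℝ c s)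
    (hd1 : ∀ s ∈ Set.Ico s1 smax, 0 < deriv c s)
    (hdiff2 : ∀ s ∈ Set.Ico s1 smax, DifferentiableAt ℝ (deriv c) s)
    (hineq : ∀ s ∈ Set.Ico s1 smax,
      deriv (deriv c) s ≤ C * (c s) ^ ((-3:ℝ)/2) * (deriv c s) ^ 2) :
    ∃ M C' : ℝ, 0 < C' ∧ (∀ s ∈ Set.Ico s1 smax, deriv c s ≤ M) ∧
      ∀ s ∈ Set.Ico s1 smax, c s - c s1 ≤ C' * |s - s1| := by
  have hs1 : s1 ∈ Ico s1 smax := ⟨le_rfl, hs⟩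
  set M := deriv c s1 * exp (2 * C * c s1 ^ (-1 / 2 : ℝ))
  have hM : 0 < M := mul_pos (hd1 s1 hs1) (exp_pos _)
  have hanti := lyapunov_antitoneOn (convex_Ico s1 smax) hpos hd1 hdiff hdiff2 hineq
  have hbound : ∀ s ∈ Ico s1 smax, deriv c s ≤ M := fun s hs ↦
    deriv_le_of_lyapunov_le hC.le (hpos s hs).le (hd1 s1 hs1) (hd1 s hs) (hanti hs1 hs hs.1)
  refine ⟨M, M, hM, hbound, fun s hs ↦ ?_⟩
  rw [abs_of_nonneg (sub_nonneg.mpr hs.1)]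
  exact (convex_Ico s1 smax).image_sub_le_mul_sub_of_deriv_le
    (fun x hx ↦ (hdiff x hx).continuousAt.continuousWithinAt)
    (fun x hx ↦ (hdiff x (interior_subset hx)).differentiableWithinAt)
    (fun x hx ↦ hbound x (interior_subset hx)) s1 hs1 s hs hs.1

theorem stmt13 (c : ℝ → ℝ) (s1 smax C : ℝ) (hs : s1 < smax) (hC : 0 < C)
    (hinit : 1 ≤ c s1)
    (hpos : ∀ s ∈ Set.Ico s1 smax, 0 < c s)
    (hdiff : ∀ s ∈ Set.Ico s1 smax, DifferentiableAt ℝ c s)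
    (hd1 : ∀ s ∈ Set.Ico s1 smax, 0 < deriv c s)
    (hdiff2 : ∀ s ∈ Set.Ico s1 smax, DifferentiableAt ℝ (deriv c) s)
    (hineq : ∀ s ∈ Set.Ico s1 smax,
      deriv (deriv c) s ≤ C * (c s) ^ ((-3:ℝ)/2) * (deriv c s) ^ 2) :
    ∃ M C' : ℝ, 0 < C' ∧ (∀ s ∈ Set.Ico s1 smax, deriv c s ≤ M) ∧
      ∀ s ∈ Set.Ico s1 smax, c s - c s1 ≤ C' * |s - s1| :=
  stmt13_general c s1 smax C hs hC hpos hdiff hd1 hdiff2 hineq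
end

section
/- Let D_± : [t1,∞) → ℝ be nonnegative C¹ functions satisfying, for some C > 0 and all t ≥ t1 ≥ 1: D_∓'(t) ≤ -(4/t) D_∓(t) + C t^{-3/2} D_∓(t) + (1/(2t))(D_+(t) + D_-(t)) + C t^{-5} D_∓(t)^{1/2}. Then there exists C' > 0 such that D_+(t) + D_-(t) ≤ C' t^{-3} for all t ≥ t1. -/
/-!
Adding the two inequalities and absorbing the square-root terms through `√D ≤ D + 1` shows that
`u = D₊ + D₋ + t⁻³` satisfies `u' ≤ (-3/t + 2C t^{-3/2}) u`; the summand `t⁻³` is what absorbs the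
inhomogeneous terms `C t⁻⁵ √D`. For the integrating factor `w = t³ exp (4C t^{-1/2}) ≥ t³` this
means `u w` is nonincreasing, so `t³ (D₊ + D₋) ≤ u w` stays below its value at `t₁`.
-/

open Real Set

theorem antitoneOn_mul_of_hasDerivAt_le_mul {u u' w a : ℝ → ℝ} {t₀ : ℝ}
    (hu : ∀ t ≥ t₀, HasDerivAt u (u' t) t) (hw : ∀ t ≥ t₀, HasDerivAt w (-(a t) * w t) t)
    (hw₀ : ∀ t ≥ t₀, 0 ≤ w t) (h : ∀ t ≥ t₀, u' t ≤ a t * u t) :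
    AntitoneOn (fun t => u t * w t) (Ici t₀) := by
  have hderiv : ∀ t ≥ t₀, HasDerivAt (fun t => u t * w t) ((u' t - a t * u t) * w t) t :=
    fun t ht => ((hu t ht).mul (hw t ht)).congr_deriv (by ring)
  refine antitoneOn_of_hasDerivWithinAt_nonpos (f' := fun t => (u' t - a t * u t) * w t)
    (convex_Ici t₀) (fun t ht => (hderiv t ht).continuousAt.continuousWithinAt)
    (fun t ht => ?_) (fun t ht => ?_)
  · rw [interior_Ici] at ht
    exact (hderiv t (le_of_lt ht)).hasDerivWithinAt
  · rw [interior_Ici] at ht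
    exact mul_nonpos_of_nonpos_of_nonneg (sub_nonpos.2 (h t ht.le)) (hw₀ t ht.le)

theorem rpow_neg_five_mul_sqrt_le {t D : ℝ} (ht : 1 ≤ t) (hD : 0 ≤ D) :
    t ^ (-5 : ℝ) * D ^ ((1 : ℝ) / 2) ≤ t ^ ((-3 : ℝ) / 2) * (D + t ^ (-3 : ℝ)) := by
  have hsqrt : D ^ ((1 : ℝ) / 2) ≤ D + 1 := by
    rw [← sqrt_eq_rpow]
    nlinarith [sq_sqrt hD, sqrt_nonneg D]
  have h₁ : t ^ (-5 : ℝ) ≤ t ^ ((-3 : ℝ) / 2) := rpow_le_rpow_of_exponent_le ht (by norm_num)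
  have h₂ : t ^ (-5 : ℝ) ≤ t ^ ((-3 : ℝ) / 2) * t ^ (-3 : ℝ) := by
    rw [← rpow_add (by linarith)]
    exact rpow_le_rpow_of_exponent_le ht (by norm_num)
  calc t ^ (-5 : ℝ) * D ^ ((1 : ℝ) / 2) ≤ t ^ (-5 : ℝ) * D + t ^ (-5 : ℝ) := by
        nlinarith [rpow_nonneg (zero_le_one.trans ht) (-5 : ℝ)]
    _ ≤ _ := by nlinarith

theorem hasDerivAt_rpow_three_mul_exp {C t : ℝ} (ht : 0 < t) :
    HasDerivAt (fun x => x ^ (3 : ℝ) * exp (4 * C * x ^ ((-1 : ℝ) / 2)))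
      (-(-3 / t + 2 * C * t ^ ((-3 : ℝ) / 2)) *
        (t ^ (3 : ℝ) * exp (4 * C * t ^ ((-1 : ℝ) / 2)))) t := by
  have hpow := hasDerivAt_rpow_const (p := (3 : ℝ)) (Or.inl ht.ne')
  have hexp := ((hasDerivAt_rpow_const (p := (-1 : ℝ) / 2) (Or.inl ht.ne')).const_mul (4 * C)).exp
  refine (hpow.mul hexp).congr_deriv ?_
  rw [rpow_sub_one ht.ne', show (-1 : ℝ) / 2 - 1 = -3 / 2 by norm_num]
  field_simp
  ring

theorem add_add_rpow_neg_three_deriv_le {C t P M P' M' : ℝ} (ht : 1 ≤ t) (hC : 0 ≤ C)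
    (hP : 0 ≤ P) (hM : 0 ≤ M)
    (hP' : P' ≤ -(4 / t) * P + C * t ^ ((-3 : ℝ) / 2) * P
      + (1 / (2 * t)) * (P + M) + C * t ^ (-5 : ℝ) * P ^ ((1 : ℝ) / 2))
    (hM' : M' ≤ -(4 / t) * M + C * t ^ ((-3 : ℝ) / 2) * M
      + (1 / (2 * t)) * (P + M) + C * t ^ (-5 : ℝ) * M ^ ((1 : ℝ) / 2)) :
    P' + M' + -3 * t ^ ((-3 : ℝ) - 1)
      ≤ (-3 / t + 2 * C * t ^ ((-3 : ℝ) / 2)) * (P + M + t ^ (-3 : ℝ)) := by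
  have eP := mul_le_mul_of_nonneg_left (rpow_neg_five_mul_sqrt_le ht hP) hC
  have eM := mul_le_mul_of_nonneg_left (rpow_neg_five_mul_sqrt_le ht hM) hC
  rw [rpow_sub_one (by linarith)]
  linear_combination hP' + hM' + eP + eM

theorem stmt15 (Dp Dm : ℝ → ℝ) (t1 C : ℝ) (ht1 : 1 ≤ t1) (hC : 0 < C)
    (hnnp : ∀ t ≥ t1, 0 ≤ Dp t) (hnnm : ∀ t ≥ t1, 0 ≤ Dm t)
    (hdp : ∀ t ≥ t1, DifferentiableAt ℝ Dp t) (hdm : ∀ t ≥ t1, DifferentiableAt ℝ Dm t)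
    (hip : ∀ t ≥ t1, deriv Dp t ≤ -(4 / t) * Dp t + C * t ^ ((-3:ℝ)/2) * Dp t
      + (1 / (2 * t)) * (Dp t + Dm t) + C * t ^ ((-5:ℝ)) * (Dp t) ^ ((1:ℝ)/2))
    (him : ∀ t ≥ t1, deriv Dm t ≤ -(4 / t) * Dm t + C * t ^ ((-3:ℝ)/2) * Dm t
      + (1 / (2 * t)) * (Dp t + Dm t) + C * t ^ ((-5:ℝ)) * (Dm t) ^ ((1:ℝ)/2)) :
    ∃ C' > 0, ∀ t ≥ t1, Dp t + Dm t ≤ C' * t ^ ((-3:ℝ)) := by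
  have hpos : ∀ t ≥ t1, 0 < t := fun t ht => by linarith
  set u : ℝ → ℝ := fun t => Dp t + Dm t + t ^ (-3 : ℝ)
  set w : ℝ → ℝ := fun t => t ^ (3 : ℝ) * exp (4 * C * t ^ ((-1 : ℝ) / 2))
  have hu : ∀ t ≥ t1, HasDerivAt u (deriv Dp t + deriv Dm t + -3 * t ^ ((-3 : ℝ) - 1)) t :=
    fun t ht => ((hdp t ht).hasDerivAt.add (hdm t ht).hasDerivAt).add
      (hasDerivAt_rpow_const (Or.inl (hpos t ht).ne'))
  have hanti : AntitoneOn (fun t => u t * w t) (Ici t1) :=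
    antitoneOn_mul_of_hasDerivAt_le_mul hu (fun t ht => hasDerivAt_rpow_three_mul_exp (hpos t ht))
      (fun t ht => by have := hpos t ht; positivity)
      (fun t ht => add_add_rpow_neg_three_deriv_le (ht1.trans ht) hC.le (hnnp t ht) (hnnm t ht)
        (hip t ht) (him t ht))
  refine ⟨u t1 * w t1, ?_, fun t ht => ?_⟩
  · have := hpos t1 le_rfl
    have := hnnp t1 le_rfl
    have := hnnm t1 le_rfl
    positivity
  have ht0 := hpos t ht
  have hu0 : 0 ≤ u t := by have := hnnp t ht; have := hnnm t ht; positivity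
  calc Dp t + Dm t ≤ u t := le_add_of_nonneg_right (by positivity)
    _ = u t * t ^ (3 : ℝ) * t ^ (-3 : ℝ) := by
        rw [mul_assoc, ← rpow_add ht0]; norm_num
    _ ≤ u t * w t * t ^ (-3 : ℝ) := by
        gcongr
        exact le_mul_of_one_le_right (by positivity) (one_le_exp (by positivity))
    _ ≤ u t1 * w t1 * t ^ (-3 : ℝ) :=
        mul_le_mul_of_nonneg_right (hanti self_mem_Ici ht ht) (by positivity)
end

section
/- Let λ̂ : [t1,∞) → ℝ satisfy |λ̂(t)| ≤ K t^{-1/2} for all t ≥ t1 ≥ 1 and λ̂'(t) = (3/t)(1 - e^{λ̂(t)/2}) + r(t) with |r(t)| ≤ C t^{-2}. Then there exists C' > 0 with |λ̂(t)| ≤ C' t^{-1} for all t ≥ t1. -/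
/-!
Write `λ' = -(3 / (2t)) λ + E` with `E = (3 / t) (λ / 2 + 1 - exp (λ / 2)) + r`. The a priori bound
`λ² ≤ K² / t` and the Taylor estimate `|exp x - 1 - x| ≤ x² exp |x|` give `E = O(t⁻²)`. The weight
`t ^ (3/2)` removes the linear term: `(t ^ (3/2) λ)' = t ^ (3/2) E = O(t ^ (-1/2))`, so integrating,
`t ^ (3/2) λ = O(t ^ (1/2))`, i.e. `λ = O(t⁻¹)`.
-/

open Real

theorem Real.abs_exp_sub_one_sub_id_le_sq_mul_exp_abs (x : ℝ) :
    |exp x - 1 - x| ≤ x ^ 2 * exp |x| := by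
  rcases le_or_gt |x| 1 with hx | hx
  · exact (abs_exp_sub_one_sub_id_le hx).trans
      (le_mul_of_one_le_right (sq_nonneg x) (one_le_exp (abs_nonneg x)))
  have hx2 : 1 < x ^ 2 := (one_lt_sq_iff_one_lt_abs x).2 hx
  rw [abs_of_nonneg (by linarith [add_one_le_exp x])]
  rcases le_or_gt 0 x with hx0 | hx0
  · rw [abs_of_nonneg hx0]
    nlinarith [exp_pos x]
  · have : exp x < 1 := exp_lt_one_iff.2 hx0
    nlinarith [one_le_exp (abs_nonneg x), abs_of_neg hx0]

theorem abs_le_mul_rpow_of_abs_deriv_le {g g' : ℝ → ℝ} {a q M : ℝ} (ha : 1 ≤ a) (hq : 0 < q)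
    (hM : 0 ≤ M) (hg : ∀ t ≥ a, HasDerivAt g (g' t) t)
    (hg' : ∀ t ≥ a, |g' t| ≤ M * t ^ (q - 1)) :
    ∀ t ≥ a, |g t| ≤ (|g a| + M / q) * t ^ q := by
  intro t ht
  set c := |g a| + M / q
  have hc : 0 ≤ c := by positivity
  refine image_norm_le_of_norm_deriv_right_le_deriv_boundary'
    (fun x hx => (hg x hx.1).continuousAt.continuousWithinAt)
    (fun x hx => (hg x hx.1).hasDerivWithinAt) (B' := fun x => c * (q * x ^ (q - 1))) ?_
    (fun x _ => (continuousAt_const.mul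
      (continuousAt_rpow_const x q (Or.inr hq.le))).continuousWithinAt)
    (fun x hx => ((hasDerivAt_rpow_const (Or.inl (by linarith [hx.1]))).const_mul c
      ).hasDerivWithinAt) (fun x hx => ?_) ⟨ht, le_rfl⟩
  · have : |g a| ≤ c := le_add_of_nonneg_right (by positivity)
    simpa using this.trans (le_mul_of_one_le_right hc (one_le_rpow ha hq.le))
  · have hcq : M ≤ c * q := by
      rw [add_mul, div_mul_cancel₀ M hq.ne']
      linarith [mul_nonneg (abs_nonneg (g a)) hq.le]
    rw [Real.norm_eq_abs, ← mul_assoc]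
    exact (hg' x hx.1).trans
      (mul_le_mul_of_nonneg_right hcq (rpow_nonneg (by linarith [hx.1]) _))

theorem abs_half_add_one_sub_exp_half_le {x K t : ℝ} (ht : 1 ≤ t) (hK : 0 ≤ K)
    (hx : |x| ≤ K * t ^ ((-1:ℝ) / 2)) :
    |x / 2 + 1 - exp (x / 2)| ≤ K ^ 2 * exp (K / 2) / 4 * t⁻¹ := by
  have ht0 : 0 < t := by linarith
  have hsq : (t ^ ((-1:ℝ) / 2)) ^ 2 = t⁻¹ := by
    rw [← rpow_natCast, ← rpow_mul ht0.le]
    norm_num [rpow_neg_one]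
  have hx2 : x ^ 2 ≤ K ^ 2 * t⁻¹ := by
    rw [← hsq, ← mul_pow, ← sq_abs]
    exact pow_le_pow_left₀ (abs_nonneg x) hx 2
  have hxK : |x| ≤ K :=
    hx.trans (mul_le_of_le_one_right hK (rpow_le_one_of_one_le_of_nonpos ht (by norm_num)))
  calc |x / 2 + 1 - exp (x / 2)| = |exp (x / 2) - 1 - x / 2| := by
        rw [← abs_neg]; ring_nf
    _ ≤ (x / 2) ^ 2 * exp |x / 2| := abs_exp_sub_one_sub_id_le_sq_mul_exp_abs _
    _ ≤ K ^ 2 * t⁻¹ / 4 * exp (K / 2) := by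
        rw [div_pow, abs_div, abs_two]
        gcongr
        norm_num
    _ = K ^ 2 * exp (K / 2) / 4 * t⁻¹ := by ring

theorem abs_le_mul_inv_of_hasDerivAt_eq_neg_div_mul_add {lam E : ℝ → ℝ} {a p M : ℝ} (ha : 1 ≤ a)
    (hp : 1 < p) (hM : 0 ≤ M) (hlam : ∀ t ≥ a, HasDerivAt lam (-(p / t) * lam t + E t) t)
    (hE : ∀ t ≥ a, |E t| ≤ M / t ^ 2) :
    ∀ t ≥ a, |lam t| ≤ (a ^ p * |lam a| + M / (p - 1)) * t⁻¹ := by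
  have hweighted : ∀ t ≥ a, HasDerivAt (fun s => s ^ p * lam s) (t ^ p * E t) t := by
    intro t ht
    have ht0 : t ≠ 0 := by linarith
    refine ((hasDerivAt_rpow_const (Or.inl ht0)).mul (hlam t ht)).congr_deriv ?_
    rw [rpow_sub_one ht0]
    field_simp
    ring
  have hbound : ∀ t ≥ a, |t ^ p * E t| ≤ M * t ^ (p - 1 - 1) := by
    intro t ht
    have ht0 : 0 < t := by linarith
    rw [abs_mul, abs_of_nonneg (rpow_nonneg ht0.le p), sub_sub, one_add_one_eq_two,
      rpow_sub ht0, rpow_two, mul_div_assoc', mul_comm M, mul_div_assoc]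
    exact mul_le_mul_of_nonneg_left (hE t ht) (rpow_nonneg ht0.le p)
  intro t ht
  have ht0 : 0 < t := by linarith
  have key := abs_le_mul_rpow_of_abs_deriv_le ha (sub_pos.2 hp) hM hweighted hbound t ht
  rw [abs_mul, abs_mul, abs_of_nonneg (rpow_nonneg ht0.le p),
    abs_of_nonneg (rpow_nonneg (by linarith) p), rpow_sub_one ht0.ne'] at key
  rw [div_eq_mul_inv (t ^ p), mul_left_comm] at key
  exact le_of_mul_le_mul_left key (rpow_pos_of_pos ht0 p)

theorem stmt17 (lam r : ℝ → ℝ) (t1 K C : ℝ) (ht1 : 1 ≤ t1) (hK : 0 < K) (hC : 0 < C)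
    (hbound : ∀ t ≥ t1, |lam t| ≤ K * t ^ ((-1:ℝ)/2))
    (hr : ∀ t ≥ t1, |r t| ≤ C * t ^ ((-2:ℝ)))
    (hderiv : ∀ t ≥ t1, HasDerivAt lam ((3 / t) * (1 - Real.exp (lam t / 2)) + r t) t) :
    ∃ C' > 0, ∀ t ≥ t1, |lam t| ≤ C' * t⁻¹ := by
  set M := 3 * (K ^ 2 * exp (K / 2) / 4) + C
  have hE : ∀ t ≥ t1, |3 / t * (lam t / 2 + 1 - exp (lam t / 2)) + r t| ≤ M / t ^ 2 := by
    intro t ht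
    have ht0 : 0 < t := by linarith
    have hr' : |r t| ≤ C / t ^ 2 := by
      simpa [rpow_neg ht0.le, div_eq_mul_inv] using hr t ht
    calc |3 / t * (lam t / 2 + 1 - exp (lam t / 2)) + r t|
        ≤ 3 / t * |lam t / 2 + 1 - exp (lam t / 2)| + |r t| :=
          (abs_add_le _ _).trans_eq (by rw [abs_mul, abs_of_pos (by positivity : 0 < 3 / t)])
      _ ≤ 3 / t * (K ^ 2 * exp (K / 2) / 4 * t⁻¹) + C / t ^ 2 := by
          gcongr
          exact abs_half_add_one_sub_exp_half_le (ht1.trans ht) hK.le (hbound t ht)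
      _ = M / t ^ 2 := by field_simp; ring
  have hdecay := abs_le_mul_inv_of_hasDerivAt_eq_neg_div_mul_add ht1 (by norm_num : (1:ℝ) < 3 / 2)
    (by positivity) (fun t ht => (hderiv t ht).congr_deriv (by ring)) hE
  exact ⟨max _ (1 : ℝ), lt_max_of_lt_right one_pos, fun t ht => (hdecay t ht).trans
    (mul_le_mul_of_nonneg_right (le_max_left _ _) (inv_nonneg.2 (by linarith)))⟩
end

section
/- Let φ, α, λ be smooth with α > 0 on I × S¹, and suppose φ satisfies ∂_t(t α^{-1/2} φ_t) - ∂_θ(t α^{1/2} φ_θ) = -t^{1/2} α^{-1/2} e^{λ/2} V'(φ). Define B_± = (∂_t φ ± α^{1/2} ∂_θ φ)². Then ∂_± B_∓ = -(2/t - α_t/α) B_∓ ∓ (2/t) α^{1/2} φ_θ (∂_∓ φ) - 2 t^{-1/2} e^{λ/2} V'(φ) (∂_∓ φ), where ∂_± = ∂_t ± α^{1/2} ∂_θ. -/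
/-- Partial derivative with respect to the first (time) variable. -/
noncomputable def ptd (u : ℝ → ℝ → ℝ) (t θ : ℝ) : ℝ := deriv (fun s => u s θ) t

/-- Partial derivative with respect to the second (space) variable. -/
noncomputable def pθd (u : ℝ → ℝ → ℝ) (t θ : ℝ) : ℝ := deriv (fun x => u t x) θ

lemma ptd_eq_fderiv {u : ℝ → ℝ → ℝ} (hu : ContDiff ℝ (⊤ : ℕ∞) (Function.uncurry u)) (t θ : ℝ) :
    ptd u t θ = fderiv ℝ (Function.uncurry u) (t, θ) (1, 0) := by
  have hg : HasDerivAt (fun s : ℝ => ((s, θ) : ℝ × ℝ)) (1, 0) t :=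
    (hasDerivAt_id t).prodMk (hasDerivAt_const t θ)
  have h := ((hu.differentiable (by simp) (t, θ)).hasFDerivAt).comp_hasDerivAt t hg
  have h2 : HasDerivAt (fun s => u s θ) (fderiv ℝ (Function.uncurry u) (t, θ) (1, 0)) t := h
  exact h2.deriv

lemma pθd_eq_fderiv {u : ℝ → ℝ → ℝ} (hu : ContDiff ℝ (⊤ : ℕ∞) (Function.uncurry u)) (t θ : ℝ) :
    pθd u t θ = fderiv ℝ (Function.uncurry u) (t, θ) (0, 1) := by
  have hg : HasDerivAt (fun x : ℝ => ((t, x) : ℝ × ℝ)) (0, 1) θ :=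
    (hasDerivAt_const θ t).prodMk (hasDerivAt_id θ)
  have h := ((hu.differentiable (by simp) (t, θ)).hasFDerivAt).comp_hasDerivAt θ hg
  have h2 : HasDerivAt (fun x => u t x) (fderiv ℝ (Function.uncurry u) (t, θ) (0, 1)) θ := h
  exact h2.deriv

lemma hasDerivAt_sliceT {u : ℝ → ℝ → ℝ} (hu : ContDiff ℝ (⊤ : ℕ∞) (Function.uncurry u)) (t θ : ℝ) :
    HasDerivAt (fun s => u s θ) (ptd u t θ) t := by
  have hg : HasDerivAt (fun s : ℝ => ((s, θ) : ℝ × ℝ)) (1, 0) t :=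
    (hasDerivAt_id t).prodMk (hasDerivAt_const t θ)
  have h := ((hu.differentiable (by simp) (t, θ)).hasFDerivAt).comp_hasDerivAt t hg
  have h2 : HasDerivAt (fun s => u s θ) (fderiv ℝ (Function.uncurry u) (t, θ) (1, 0)) t := h
  rwa [ptd_eq_fderiv hu t θ]

lemma hasDerivAt_sliceθ {u : ℝ → ℝ → ℝ} (hu : ContDiff ℝ (⊤ : ℕ∞) (Function.uncurry u)) (t θ : ℝ) :
    HasDerivAt (fun x => u t x) (pθd u t θ) θ := by
  have hg : HasDerivAt (fun x : ℝ => ((t, x) : ℝ × ℝ)) (0, 1) θ :=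
    (hasDerivAt_const θ t).prodMk (hasDerivAt_id θ)
  have h := ((hu.differentiable (by simp) (t, θ)).hasFDerivAt).comp_hasDerivAt θ hg
  have h2 : HasDerivAt (fun x => u t x) (fderiv ℝ (Function.uncurry u) (t, θ) (0, 1)) θ := h
  rwa [pθd_eq_fderiv hu t θ]

lemma contDiff_ptd {u : ℝ → ℝ → ℝ} (hu : ContDiff ℝ (⊤ : ℕ∞) (Function.uncurry u)) :
    ContDiff ℝ (⊤ : ℕ∞) (Function.uncurry (ptd u)) := by
  have h1 : ContDiff ℝ (⊤ : ℕ∞) (fun p : ℝ × ℝ => fderiv ℝ (Function.uncurry u) p (1, 0)) :=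
    (hu.fderiv_right (by simp)).clm_apply contDiff_const
  have h2 : Function.uncurry (ptd u) = fun p : ℝ × ℝ => fderiv ℝ (Function.uncurry u) p (1, 0) := by
    funext p
    exact ptd_eq_fderiv hu p.1 p.2
  rw [h2]; exact h1

lemma contDiff_pθd {u : ℝ → ℝ → ℝ} (hu : ContDiff ℝ (⊤ : ℕ∞) (Function.uncurry u)) :
    ContDiff ℝ (⊤ : ℕ∞) (Function.uncurry (pθd u)) := by
  have h1 : ContDiff ℝ (⊤ : ℕ∞) (fun p : ℝ × ℝ => fderiv ℝ (Function.uncurry u) p (0, 1)) :=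
    (hu.fderiv_right (by simp)).clm_apply contDiff_const
  have h2 : Function.uncurry (pθd u) = fun p : ℝ × ℝ => fderiv ℝ (Function.uncurry u) p (0, 1) := by
    funext p
    exact pθd_eq_fderiv hu p.1 p.2
  rw [h2]; exact h1

lemma clairaut {u : ℝ → ℝ → ℝ} (hu : ContDiff ℝ (⊤ : ℕ∞) (Function.uncurry u)) (t θ : ℝ) :
    ptd (pθd u) t θ = pθd (ptd u) t θ := by
  set F := Function.uncurry u with hF
  have hdF : ∀ y, HasFDerivAt F (fderiv ℝ F y) y := fun y => (hu.differentiable (by simp) y).hasFDerivAt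
  have hdF2 : HasFDerivAt (fderiv ℝ F) (fderiv ℝ (fderiv ℝ F) (t, θ)) (t, θ) :=
    (((hu.fderiv_right (m := (⊤ : ℕ∞)) (by simp)).differentiable (by simp)) (t, θ)).hasFDerivAt
  have hsymm := second_derivative_symmetric hdF hdF2 ((1:ℝ), (0:ℝ)) ((0:ℝ), (1:ℝ))
  have e5 : ∀ v w : ℝ × ℝ, fderiv ℝ (fun p : ℝ × ℝ => fderiv ℝ F p v) (t, θ) w
      = fderiv ℝ (fderiv ℝ F) (t, θ) w v := by
    intro v w
    have hc : HasFDerivAt (fun p : ℝ × ℝ => fderiv ℝ F p v)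
        ((ContinuousLinearMap.apply ℝ ℝ v).comp (fderiv ℝ (fderiv ℝ F) (t, θ))) (t, θ) :=
      (ContinuousLinearMap.apply ℝ ℝ v).hasFDerivAt.comp (t, θ) hdF2
    rw [hc.fderiv]; rfl
  have e1 : ptd (pθd u) t θ = fderiv ℝ (Function.uncurry (pθd u)) (t, θ) (1, 0) :=
    ptd_eq_fderiv (contDiff_pθd hu) t θ
  have e2 : pθd (ptd u) t θ = fderiv ℝ (Function.uncurry (ptd u)) (t, θ) (0, 1) :=
    pθd_eq_fderiv (contDiff_ptd hu) t θ
  have e3 : Function.uncurry (pθd u) = fun p : ℝ × ℝ => fderiv ℝ F p (0, 1) := by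
    funext p; exact pθd_eq_fderiv hu p.1 p.2
  have e4 : Function.uncurry (ptd u) = fun p : ℝ × ℝ => fderiv ℝ F p (1, 0) := by
    funext p; exact ptd_eq_fderiv hu p.1 p.2
  rw [e1, e2, e3, e4, e5, e5]
  exact hsymm

set_option maxHeartbeats 2000000 in
theorem stmt19 (φ α lam : ℝ → ℝ → ℝ) (V : ℝ → ℝ)
    (hφ : ContDiff ℝ (⊤ : ℕ∞) (Function.uncurry φ)) (hα : ContDiff ℝ (⊤ : ℕ∞) (Function.uncurry α))
    (hlam : ContDiff ℝ (⊤ : ℕ∞) (Function.uncurry lam)) (hV : ContDiff ℝ (⊤ : ℕ∞) V)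
    (hαpos : ∀ t θ : ℝ, 0 < α t θ)
    (heom : ∀ t θ : ℝ,
      ptd (fun t θ => t * (Real.sqrt (α t θ))⁻¹ * ptd φ t θ) t θ
        - pθd (fun t θ => t * Real.sqrt (α t θ) * pθd φ t θ) t θ
      = - t ^ ((1:ℝ)/2) * (Real.sqrt (α t θ))⁻¹ * Real.exp (lam t θ / 2) * deriv V (φ t θ)) :
    ∀ s : ℝ, s = 1 ∨ s = -1 → ∀ t θ : ℝ, 0 < t →
      ptd (fun t θ => (ptd φ t θ - s * Real.sqrt (α t θ) * pθd φ t θ) ^ 2) t θ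
        + s * Real.sqrt (α t θ) *
          pθd (fun t θ => (ptd φ t θ - s * Real.sqrt (α t θ) * pθd φ t θ) ^ 2) t θ
      = -(2 / t - ptd α t θ / α t θ) * (ptd φ t θ - s * Real.sqrt (α t θ) * pθd φ t θ) ^ 2
        - s * (2 / t) * Real.sqrt (α t θ) * pθd φ t θ *
          (ptd φ t θ - s * Real.sqrt (α t θ) * pθd φ t θ)
        - 2 * t ^ ((-1:ℝ)/2) * Real.exp (lam t θ / 2) * deriv V (φ t θ) *
          (ptd φ t θ - s * Real.sqrt (α t θ) * pθd φ t θ) := by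
  intro s hs t θ ht
  have hA : 0 < α t θ := hαpos t θ
  have hsa : (0:ℝ) < Real.sqrt (α t θ) := Real.sqrt_pos.mpr hA
  have hsane : Real.sqrt (α t θ) ≠ 0 := hsa.ne'
  have h1 : HasDerivAt (fun s' => ptd φ s' θ) (ptd (ptd φ) t θ) t :=
    hasDerivAt_sliceT (contDiff_ptd hφ) t θ
  have h4 : HasDerivAt (fun s' => pθd φ s' θ) (ptd (pθd φ) t θ) t :=
    hasDerivAt_sliceT (contDiff_pθd hφ) t θ
  have hα1 : HasDerivAt (fun s' => α s' θ) (ptd α t θ) t := hasDerivAt_sliceT hα t θ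
  have hsq1 : HasDerivAt (fun s' => Real.sqrt (α s' θ)) (ptd α t θ / (2 * Real.sqrt (α t θ))) t :=
    hα1.sqrt hA.ne'
  have h1θ : HasDerivAt (fun x => ptd φ t x) (pθd (ptd φ) t θ) θ :=
    hasDerivAt_sliceθ (contDiff_ptd hφ) t θ
  have h4θ : HasDerivAt (fun x => pθd φ t x) (pθd (pθd φ) t θ) θ :=
    hasDerivAt_sliceθ (contDiff_pθd hφ) t θ
  have hαθ : HasDerivAt (fun x => α t x) (pθd α t θ) θ := hasDerivAt_sliceθ hα t θ
  have hsqθ : HasDerivAt (fun x => Real.sqrt (α t x)) (pθd α t θ / (2 * Real.sqrt (α t θ))) θ :=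
    hαθ.sqrt hA.ne'
  have hcl : ptd (pθd φ) t θ = pθd (ptd φ) t θ := clairaut hφ t θ
  have hBt : ptd (fun t θ => (ptd φ t θ - s * Real.sqrt (α t θ) * pθd φ t θ) ^ 2) t θ
      = 2 * (ptd φ t θ - s * Real.sqrt (α t θ) * pθd φ t θ) *
        (ptd (ptd φ) t θ - (s * (ptd α t θ / (2 * Real.sqrt (α t θ))) * pθd φ t θ
          + s * Real.sqrt (α t θ) * ptd (pθd φ) t θ)) := by
    have H := (h1.sub ((hsq1.const_mul s).mul h4)).pow 2
    have h0 : ptd (fun t θ => (ptd φ t θ - s * Real.sqrt (α t θ) * pθd φ t θ) ^ 2) t θ = _ :=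
      H.deriv
    rw [h0]; push_cast; simp only [Pi.sub_apply, Pi.mul_apply]; ring
  have hBθ : pθd (fun t θ => (ptd φ t θ - s * Real.sqrt (α t θ) * pθd φ t θ) ^ 2) t θ
      = 2 * (ptd φ t θ - s * Real.sqrt (α t θ) * pθd φ t θ) *
        (pθd (ptd φ) t θ - (s * (pθd α t θ / (2 * Real.sqrt (α t θ))) * pθd φ t θ
          + s * Real.sqrt (α t θ) * pθd (pθd φ) t θ)) := by
    have H := (h1θ.sub ((hsqθ.const_mul s).mul h4θ)).pow 2
    have h0 : pθd (fun t θ => (ptd φ t θ - s * Real.sqrt (α t θ) * pθd φ t θ) ^ 2) t θ = _ :=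
      H.deriv
    rw [h0]; push_cast; simp only [Pi.sub_apply, Pi.mul_apply]; ring
  have hE1 : ptd (fun t θ => t * (Real.sqrt (α t θ))⁻¹ * ptd φ t θ) t θ
      = ptd φ t θ / Real.sqrt (α t θ)
        - t * ptd α t θ * ptd φ t θ / (2 * Real.sqrt (α t θ) ^ 3)
        + t / Real.sqrt (α t θ) * ptd (ptd φ) t θ := by
    have hinv := hsq1.inv hsane
    have H := ((hasDerivAt_id t).mul hinv).mul h1
    have h0 : ptd (fun t θ => t * (Real.sqrt (α t θ))⁻¹ * ptd φ t θ) t θ = _ := H.deriv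
    rw [h0]; simp only [id_eq, Pi.mul_apply, Pi.inv_apply]; ring
  have hE2 : pθd (fun t θ => t * Real.sqrt (α t θ) * pθd φ t θ) t θ
      = t * pθd α t θ * pθd φ t θ / (2 * Real.sqrt (α t θ))
        + t * Real.sqrt (α t θ) * pθd (pθd φ) t θ := by
    have H := ((hsqθ.const_mul t).mul h4θ)
    have h0 : pθd (fun t θ => t * Real.sqrt (α t θ) * pθd φ t θ) t θ = _ := H.deriv
    rw [h0]; ring
  have hE := heom t θ
  rw [hE1, hE2] at hE
  have hpow : t ^ ((1:ℝ)/2) = t * t ^ ((-1:ℝ)/2) := by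
    rw [show (1:ℝ)/2 = 1 + (-1)/2 by norm_num, Real.rpow_add ht, Real.rpow_one]
  rw [hpow] at hE
  have h4' : t / Real.sqrt (α t θ) * ptd (ptd φ) t θ
      = -(t * t ^ ((-1:ℝ)/2)) * (Real.sqrt (α t θ))⁻¹ * Real.exp (lam t θ / 2) * deriv V (φ t θ)
        - ptd φ t θ / Real.sqrt (α t θ)
        + t * ptd α t θ * ptd φ t θ / (2 * Real.sqrt (α t θ) ^ 3)
        + (t * pθd α t θ * pθd φ t θ / (2 * Real.sqrt (α t θ))
          + t * Real.sqrt (α t θ) * pθd (pθd φ) t θ) := by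
    linarith [hE]
  have hptt : ptd (ptd φ) t θ
      = -(ptd φ t θ) / t
        + ptd α t θ * ptd φ t θ / (2 * (Real.sqrt (α t θ) * Real.sqrt (α t θ)))
        + pθd α t θ * pθd φ t θ / 2
        + (Real.sqrt (α t θ) * Real.sqrt (α t θ)) * pθd (pθd φ) t θ
        - t ^ ((-1:ℝ)/2) * Real.exp (lam t θ / 2) * deriv V (φ t θ) := by
    have h5 : ptd (ptd φ) t θ
        = (Real.sqrt (α t θ) / t) * (t / Real.sqrt (α t θ) * ptd (ptd φ) t θ) := by
      field_simp
    rw [h5, h4']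
    obtain ⟨w, hw⟩ : ∃ w, Real.sqrt (α t θ) = w := ⟨_, rfl⟩
    have hw0 : w ≠ 0 := hw ▸ hsane
    rw [hw]
    field_simp
    ring
  rw [hBt, hBθ, hcl, hptt]
  obtain ⟨w, hw⟩ : ∃ w, Real.sqrt (α t θ) = w := ⟨_, rfl⟩
  have hw0 : w ≠ 0 := hw ▸ hsane
  have hαw : α t θ = w * w := by rw [← hw]; exact (Real.mul_self_sqrt hA.le).symm
  rw [hw, hαw]
  rcases hs with rfl | rfl <;> · field_simp [hw0, ht.ne']
                                 ring
end
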